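/- arXiv:1804.06485 — 3 statements merged into one kernel-verified Lean document; each statement's English description precedes it below -/
import Mathlib

section
/- Let C be a category, M and N monads on C, and φ : M ⟶ N a morphism of monads, and assume the restriction functor φ^* : Alg(N) → Alg(M) admits a left adjoint φ_! . If there exists an endofunctor X : C → C together with a natural isomorphism φ_! ⋙ U_N ≅ U_M ⋙ X of functors Alg(M) → C, then there is a natural isomorphism e : N ≅ X∘M of endofunctors of C which is compatible with the right M-actions, i.e. for every object c of C one has (N(φ_c) ≫ μ^N_c) ≫ e_c = e_{M(c)} ≫ X(μ^M_c); in particular N is a free right M-module generated by X. -/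
/-!
Since `φ^*` commutes with the forgetful functors, `M.free ⋙ φ_!` is left adjoint to `N.forget`,
so it is isomorphic to `N.free`; whiskering with `N.forget` and composing with `pbw` gives
`N ≅ M ⋙ X`. At `c`, the isomorphism `φ_!(M.free c) ≅ N.free c` is the adjoint transpose of
`φ_c`, viewed as an `M`-algebra map `M.free c ⟶ φ^*(N.free c)`. Naturality of the transposition
turns the compatibility with the right `M`-actions into the multiplicativity of `φ`.
-/

open CategoryTheory

universe v u

namespace CategoryTheory.Monad

variable {C : Type u} [Category.{v} C] {M N : Monad C}

def freeMul (T : Monad C) (c : C) : T.free.obj (T.obj c) ⟶ T.free.obj c where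
  f := T.μ.app c
  h := T.assoc c

lemma map_map_comp_μ_comp_μ (T : Monad C) {d c : C} (f : d ⟶ T.obj c) :
    T.map (T.map f ≫ T.μ.app c) ≫ T.μ.app c = T.μ.app d ≫ T.map f ≫ T.μ.app c := by
  rw [Functor.map_comp, Category.assoc, T.assoc]
  exact T.μ.naturality_assoc f _

def freeRightAction (φ : M ⟶ N) (c : C) : N.free.obj (M.obj c) ⟶ N.free.obj c where
  f := N.map (φ.app c) ≫ N.μ.app c
  h := N.map_map_comp_μ_comp_μ (φ.app c)

def freeToRestrictFree (φ : M ⟶ N) (c : C) :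
    M.free.obj c ⟶ (algebraFunctorOfMonadHom φ).obj (N.free.obj c) where
  f := φ.app c
  h := (Category.assoc _ _ _).symm.trans (φ.app_μ c).symm

variable (φ : M ⟶ N) {φ! : Algebra M ⥤ Algebra N} (adj : φ! ⊣ algebraFunctorOfMonadHom φ)

def freeCompAdj : M.free ⋙ φ! ⊣ N.forget :=
  M.adj.comp adj

lemma freeCompAdj_homEquiv (c : C) (B : Algebra N) (g : φ!.obj (M.free.obj c) ⟶ B) :
    (freeCompAdj φ adj).homEquiv c B g = M.adj.homEquiv c _ (adj.homEquiv _ B g) := by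
  show (M.adj.comp adj).homEquiv c B g = _
  rw [Adjunction.comp_homEquiv]
  rfl

def leftAdjointFreeIsoFree : M.free ⋙ φ! ≅ N.free :=
  (freeCompAdj φ adj).leftAdjointUniq N.adj

lemma leftAdjointFreeIsoFree_hom_app (c : C) :
    (leftAdjointFreeIsoFree φ adj).hom.app c =
      (adj.homEquiv _ _).symm (freeToRestrictFree φ c) := by
  apply ((freeCompAdj φ adj).homEquiv _ _).injective
  rw [leftAdjointFreeIsoFree, Adjunction.homEquiv_leftAdjointUniq_hom_app, freeCompAdj_homEquiv,
    Equiv.apply_symm_apply, Adjunction.homEquiv_unit]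
  simp only [adj_unit]
  exact (φ.app_η c).symm

lemma map_freeMul_comp_leftAdjointFreeIsoFree_hom_app (c : C) :
    φ!.map (freeMul M c) ≫ (leftAdjointFreeIsoFree φ adj).hom.app c =
      (leftAdjointFreeIsoFree φ adj).hom.app (M.obj c) ≫ freeRightAction φ c := by
  have hμ : M.μ.app c ≫ φ.app c = φ.app (M.obj c) ≫ N.map (φ.app c) ≫ N.μ.app c := by
    rw [φ.app_μ, Category.assoc, φ.naturality_assoc]
  rw [leftAdjointFreeIsoFree_hom_app, leftAdjointFreeIsoFree_hom_app,
    ← adj.homEquiv_naturality_left_symm, ← adj.homEquiv_naturality_right_symm]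
  congr 1
  ext
  exact hμ

variable (X : C ⥤ C) (pbw : φ! ⋙ N.forget ≅ M.forget ⋙ X)

def compIsoOfPBW : (M : C ⥤ C) ⋙ X ≅ N :=
  Functor.isoWhiskerLeft M.free pbw.symm ≪≫
    Functor.isoWhiskerRight (leftAdjointFreeIsoFree φ adj) N.forget

lemma map_μ_comp_compIsoOfPBW_hom_app (c : C) :
    X.map (M.μ.app c) ≫ (compIsoOfPBW φ adj X pbw).hom.app c =
      (compIsoOfPBW φ adj X pbw).hom.app (M.obj c) ≫ N.map (φ.app c) ≫ N.μ.app c := by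
  set i := leftAdjointFreeIsoFree φ adj
  have h := map_freeMul_comp_leftAdjointFreeIsoFree_hom_app φ adj c
  -- Stated over the carriers of the free algebras, where `rw` applies; `exact` then unfolds
  -- `free` to match the goal.
  have key : (M.forget ⋙ X).map (freeMul M c) ≫ pbw.inv.app (M.free.obj c) ≫
      N.forget.map (i.hom.app c) = (pbw.inv.app (M.free.obj (M.obj c)) ≫
        N.forget.map (i.hom.app (M.obj c))) ≫ N.forget.map (freeRightAction φ c) := by
    rw [pbw.inv.naturality_assoc, Functor.comp_map, ← N.forget.map_comp, h, N.forget.map_comp,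
      Category.assoc]
  exact key

end CategoryTheory.Monad

theorem pbw_implies_free_right_module
    {C : Type u} [Category.{v} C] (M N : Monad C) (φ : M ⟶ N)
    (φ! : Monad.Algebra M ⥤ Monad.Algebra N)
    (adj : φ! ⊣ Monad.algebraFunctorOfMonadHom φ)
    (X : C ⥤ C) (pbw : φ! ⋙ N.forget ≅ M.forget ⋙ X) :
    ∃ e : (N : C ⥤ C) ≅ (M : C ⥤ C) ⋙ X,
      ∀ c : C,
        (N.map (φ.app c) ≫ N.μ.app c) ≫ e.hom.app c =
          e.hom.app (M.obj c) ≫ X.map (M.μ.app c) := by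
  refine ⟨(Monad.compIsoOfPBW φ adj X pbw).symm, fun c => ?_⟩
  rw [Iso.symm_hom, ← Iso.app_inv, ← Iso.app_inv, Iso.comp_inv_eq, Category.assoc,
    Iso.eq_inv_comp]
  exact (Monad.map_μ_comp_compIsoOfPBW_hom_app φ adj X pbw c).symm
end

section
/- Let C be a category, M and N monads on C, and φ : M ⟶ N a morphism of monads, and assume the restriction functor φ^* : Alg(N) → Alg(M) admits a left adjoint φ_! . If there exists an endofunctor X : C → C and a natural isomorphism e : N ≅ X∘M such that for every object c of C one has (N(φ_c) ≫ μ^N_c) ≫ e_c = e_{M(c)} ≫ X(μ^M_c), then there is a natural isomorphism φ_! ⋙ U_N ≅ U_M ⋙ X of functors Alg(M) → C; that is, for every M-algebra (c, γ) the underlying object of φ_!(c, γ) is isomorphic to X(c), naturally with respect to morphisms of M-algebras. -/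
/-!
Transport along `e` gives, for an `M`-algebra `(a, α)`, maps `incl : X a → N a` and
`proj : N a → X a` with `incl ≫ proj = 𝟙`, and `proj` coequalizes `N α` and the right action
`N (M a) → N a`; so `X a` plays the role of `N ⊗_M a`. The multiplication of `N` descends along
`proj` to an `N`-algebra structure on `X a`, and this yields an explicit left adjoint of `φ^*`
whose underlying object is `X a` on the nose. Uniqueness of left adjoints identifies it with `φ_!`.
-/

open CategoryTheory

universe v u

namespace CategoryTheory.Monad.FreeRightModule

variable {C : Type u} [Category.{v} C] {M N : Monad C}

def rightAction (φ : M ⟶ N) (c : C) : N.obj (M.obj c) ⟶ N.obj c :=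
  N.map (φ.app c) ≫ N.μ.app c

lemma unit_comp_rightAction (φ : M ⟶ N) (c : C) :
    N.η.app (M.obj c) ≫ rightAction φ c = φ.app c := by
  simp [rightAction, ← Monad.unit_naturality_assoc]

lemma mu_comp_rightAction (φ : M ⟶ N) (c : C) :
    N.μ.app (M.obj c) ≫ rightAction φ c = N.map (rightAction φ c) ≫ N.μ.app c := by
  rw [rightAction, ← N.mu_naturality_assoc, Functor.map_comp, Category.assoc, N.assoc]

variable {X : C ⥤ C} (e : (N : C ⥤ C) ≅ (M : C ⥤ C) ⋙ X)

def IsRightModuleIso (φ : M ⟶ N) : Prop :=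
  ∀ c : C, rightAction φ c ≫ e.hom.app c = e.hom.app (M.obj c) ≫ X.map (M.μ.app c)

def incl (c : C) : X.obj c ⟶ N.obj c :=
  X.map (M.η.app c) ≫ e.inv.app c

def proj {c : C} (a : M.obj c ⟶ c) : N.obj c ⟶ X.obj c :=
  e.hom.app c ≫ X.map a

lemma incl_naturality {c d : C} (f : c ⟶ d) :
    X.map f ≫ incl e d = incl e c ≫ N.map f := by
  have := e.inv.naturality f
  simp only [Functor.comp_map] at this
  rw [incl, ← X.map_comp_assoc, M.unit_naturality, X.map_comp, Category.assoc, this, incl,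
    Category.assoc]

lemma proj_naturality {A B : Algebra M} (f : A ⟶ B) :
    proj e A.a ≫ X.map f.f = N.map f.f ≫ proj e B.a := by
  have := e.hom.naturality f.f
  simp only [Functor.comp_map] at this
  rw [proj, proj, Category.assoc, ← X.map_comp, ← f.h, X.map_comp, reassoc_of% this]

lemma incl_proj (A : Algebra M) : incl e A.A ≫ proj e A.a = 𝟙 _ := by
  rw [incl, proj, Category.assoc, e.inv_hom_id_app_assoc, ← X.map_comp, A.unit, X.map_id]

lemma proj_incl {c : C} (a : M.obj c ⟶ c) :
    proj e a ≫ incl e c = e.hom.app c ≫ incl e (M.obj c) ≫ N.map a := by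
  rw [proj, Category.assoc, incl_naturality]

def act (A : Algebra M) : N.obj (X.obj A.A) ⟶ X.obj A.A :=
  N.map (incl e A.A) ≫ N.μ.app A.A ≫ proj e A.a

lemma unit_act (A : Algebra M) : N.η.app (X.obj A.A) ≫ act e A = 𝟙 _ := by
  simp [act, ← Monad.unit_naturality_assoc, incl_proj]

lemma act_naturality {A B : Algebra M} (f : A ⟶ B) :
    N.map (X.map f.f) ≫ act e B = act e A ≫ X.map f.f := by
  rw [act, act, ← N.map_comp_assoc, incl_naturality, N.map_comp_assoc, N.mu_naturality_assoc,
    Category.assoc, Category.assoc, proj_naturality]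

variable {e} {φ : M ⟶ N} (he : IsRightModuleIso e φ)
include he

lemma incl_rightAction (c : C) : incl e (M.obj c) ≫ rightAction φ c = e.inv.app c := by
  rw [← Category.comp_id (rightAction φ c), ← e.hom_inv_id_app c, reassoc_of% (he c), incl,
    Category.assoc, e.inv_hom_id_app_assoc, ← X.map_comp_assoc, M.left_unit]
  simp

lemma map_a_proj (A : Algebra M) :
    N.map A.a ≫ proj e A.a = rightAction φ A.A ≫ proj e A.a := by
  have := e.hom.naturality A.a
  simp only [Functor.comp_map] at this
  rw [proj, reassoc_of% this, reassoc_of% (he A.A), ← X.map_comp, ← X.map_comp, A.assoc]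

/-- `proj` is a morphism of `N`-algebras out of the free algebra `N a`. -/
lemma map_proj_act (A : Algebra M) :
    N.map (proj e A.a) ≫ act e A = N.μ.app A.A ≫ proj e A.a :=
  calc N.map (proj e A.a) ≫ act e A
      = N.map (e.hom.app A.A ≫ incl e (M.obj A.A)) ≫ N.map (N.map A.a) ≫ N.μ.app A.A ≫
          proj e A.a := by
        simp only [act, ← N.map_comp_assoc, proj_incl, Category.assoc]
    _ = N.map (e.hom.app A.A ≫ incl e (M.obj A.A)) ≫ N.μ.app _ ≫ rightAction φ A.A ≫
          proj e A.a := by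
        rw [N.mu_naturality_assoc, map_a_proj he]
    _ = N.map (e.hom.app A.A ≫ incl e (M.obj A.A) ≫ rightAction φ A.A) ≫ N.μ.app A.A ≫
          proj e A.a := by
        rw [reassoc_of% mu_comp_rightAction]
        simp only [Functor.map_comp, Category.assoc]
    _ = N.μ.app A.A ≫ proj e A.a := by
        rw [incl_rightAction he, e.hom_inv_id_app, N.map_id, Category.id_comp]

lemma act_assoc (A : Algebra M) :
    N.μ.app (X.obj A.A) ≫ act e A = N.map (act e A) ≫ act e A :=
  calc N.μ.app (X.obj A.A) ≫ act e A
      = N.map (N.map (incl e A.A)) ≫ N.μ.app (N.obj A.A) ≫ N.μ.app A.A ≫ proj e A.a := by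
        rw [act, N.mu_naturality_assoc]
    _ = N.map (N.map (incl e A.A)) ≫ N.map (N.μ.app A.A) ≫ N.map (proj e A.a) ≫ act e A := by
        rw [map_proj_act he, reassoc_of% N.assoc]
    _ = N.map (act e A) ≫ act e A := by
        simp only [act, Functor.map_comp, Category.assoc]

def extendScalars : Algebra M ⥤ Algebra N where
  obj A := { A := X.obj A.A, a := act e A, unit := unit_act e A, assoc := act_assoc he A }
  map f := { f := X.map f.f, h := act_naturality e f }

lemma extendScalars_comp_forget : extendScalars he ⋙ N.forget = M.forget ⋙ X := rfl

lemma map_unit_proj_act (A : Algebra M) :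
    N.map (N.η.app A.A ≫ proj e A.a) ≫ act e A = proj e A.a := by
  rw [N.map_comp, Category.assoc, map_proj_act he]
  simp

lemma proj_incl_a (B : Algebra N) :
    proj e (φ.app B.A ≫ B.a) ≫ incl e B.A ≫ B.a = B.a := by
  rw [reassoc_of% proj_incl, N.map_comp_assoc, ← B.assoc,
    ← Category.assoc (N.map _), ← rightAction, reassoc_of% (incl_rightAction he),
    e.hom_inv_id_app_assoc]

def unitHom (A : Algebra M) :
    A ⟶ (algebraFunctorOfMonadHom φ).obj ((extendScalars he).obj A) where
  f := N.η.app A.A ≫ proj e A.a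
  h := by
    show M.map (N.η.app A.A ≫ proj e A.a) ≫ φ.app _ ≫ act e A = A.a ≫ N.η.app A.A ≫ proj e A.a
    rw [reassoc_of% (φ.naturality _), map_unit_proj_act he, N.unit_naturality_assoc,
      map_a_proj he, reassoc_of% unit_comp_rightAction]
    rfl

def counitHom (B : Algebra N) :
    (extendScalars he).obj ((algebraFunctorOfMonadHom φ).obj B) ⟶ B where
  f := incl e B.A ≫ B.a
  h := by
    change N.map (incl e B.A ≫ B.a) ≫ B.a = (N.map (incl e B.A) ≫ N.μ.app B.A ≫
      proj e (φ.app B.A ≫ B.a)) ≫ incl e B.A ≫ B.a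
    rw [Category.assoc, Category.assoc, proj_incl_a he, N.map_comp_assoc, B.assoc]

def extendScalarsAdj : extendScalars he ⊣ algebraFunctorOfMonadHom φ where
  unit :=
    { app := unitHom he
      naturality := fun A B f => by
        ext
        show f.f ≫ N.η.app B.A ≫ proj e B.a = (N.η.app A.A ≫ proj e A.a) ≫ X.map f.f
        rw [N.unit_naturality_assoc, Category.assoc, proj_naturality] }
  counit :=
    { app := counitHom he
      naturality := fun B B' g => by
        ext
        show X.map g.f ≫ incl e B'.A ≫ B'.a = (incl e B.A ≫ B.a) ≫ g.f
        rw [reassoc_of% incl_naturality, g.h, Category.assoc] }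
  left_triangle_components A := by
    ext
    show X.map (N.η.app A.A ≫ proj e A.a) ≫ incl e (X.obj A.A) ≫ act e A = 𝟙 _
    rw [reassoc_of% incl_naturality, map_unit_proj_act he]
    exact incl_proj e A
  right_triangle_components B := by
    ext
    change (N.η.app B.A ≫ proj e (φ.app B.A ≫ B.a)) ≫ incl e B.A ≫ B.a = 𝟙 _
    rw [Category.assoc, proj_incl_a he]
    exact B.unit

end CategoryTheory.Monad.FreeRightModule

theorem free_right_module_implies_pbw
    {C : Type u} [Category.{v} C] (M N : Monad C) (φ : M ⟶ N)
    (φ! : Monad.Algebra M ⥤ Monad.Algebra N)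
    (adj : φ! ⊣ Monad.algebraFunctorOfMonadHom φ)
    (X : C ⥤ C) (e : (N : C ⥤ C) ≅ (M : C ⥤ C) ⋙ X)
    (compat : ∀ c : C,
      (N.map (φ.app c) ≫ N.μ.app c) ≫ e.hom.app c =
        e.hom.app (M.obj c) ≫ X.map (M.μ.app c)) :
    Nonempty (φ! ⋙ N.forget ≅ M.forget ⋙ X) :=
  open Monad.FreeRightModule in
  ⟨Functor.isoWhiskerRight (adj.leftAdjointUniq (extendScalarsAdj compat)) N.forget ≪≫
    eqToIso (extendScalars_comp_forget compat)⟩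
end

section
/- Let k be a commutative ring and P a k-module equipped with two k-bilinear operations · and [−,−] such that for all a, b, c ∈ P: (i) (a · b) · c = a · (b · c); (ii) a · (b · c) = a · (c · b); (iii) [a, b · c] = [a, b] · c + [a, c] · b; (iv) [a · b, c] = [a, c] · b − a · [c, b]. Then for all a₁, a₂, a₃, a₄ ∈ P one has a₁ · ([a₂, a₄] · a₃) + a₁ · ([a₄, a₂] · a₃) = 0 (obtained by expanding [a₁ · a₂, a₃ · a₄] in two different ways). In particular, the right module over the Leibniz operad defined by these relations is not free. -/
/-!
Both sides are expansions of `[a₁ · a₂, a₃ · a₄]`: applying the mixed relation in the left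
argument first, or in the right argument first. Associativity and right-permutativity bring
all terms to a common normal form; everything cancels except the stated sum.
-/

section PermLeibniz

variable {k P : Type*} [CommSemiring k] [AddCommGroup P] [Module k P]
  (m br : P →ₗ[k] P →ₗ[k] P)

theorem perm_mul_right_comm (massoc : ∀ a b c : P, m (m a b) c = m a (m b c))
    (mperm : ∀ a b c : P, m a (m b c) = m a (m c b)) (a b c : P) :
    m (m a b) c = m (m a c) b := by
  rw [massoc, massoc, mperm]

theorem bracket_mul_mul_expand_left_first (massoc : ∀ a b c : P, m (m a b) c = m a (m b c))
    (mperm : ∀ a b c : P, m a (m b c) = m a (m c b))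
    (rel1 : ∀ a b c : P, br a (m b c) = m (br a b) c + m (br a c) b)
    (rel2 : ∀ a b c : P, br (m a b) c = m (br a c) b - m a (br c b)) (a₁ a₂ a₃ a₄ : P) :
    br (m a₁ a₂) (m a₃ a₄) = m (m (br a₁ a₃) a₂) a₄ + m (m (br a₁ a₄) a₂) a₃
      - m a₁ (m (br a₃ a₂) a₄) + m a₁ (m (br a₂ a₄) a₃) := by
  rw [rel2, rel1, rel2]
  simp only [map_add, map_sub, LinearMap.add_apply]
  rw [mperm a₁ a₃, perm_mul_right_comm m massoc mperm _ a₄,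
    perm_mul_right_comm m massoc mperm _ a₃]
  abel

theorem bracket_mul_mul_expand_right_first (massoc : ∀ a b c : P, m (m a b) c = m a (m b c))
    (rel1 : ∀ a b c : P, br a (m b c) = m (br a b) c + m (br a c) b)
    (rel2 : ∀ a b c : P, br (m a b) c = m (br a c) b - m a (br c b)) (a₁ a₂ a₃ a₄ : P) :
    br (m a₁ a₂) (m a₃ a₄) = m (m (br a₁ a₃) a₂) a₄ + m (m (br a₁ a₄) a₂) a₃
      - m a₁ (m (br a₃ a₂) a₄) - m a₁ (m (br a₄ a₂) a₃) := by
  rw [rel1, rel2, rel2]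
  simp only [map_sub, LinearMap.sub_apply, massoc a₁]
  abel

end PermLeibniz

theorem perm_leibniz_obstruction (k : Type*) [CommRing k] (P : Type*) [AddCommGroup P]
    [Module k P] (m br : P →ₗ[k] P →ₗ[k] P)
    (massoc : ∀ a b c : P, m (m a b) c = m a (m b c))
    (mperm : ∀ a b c : P, m a (m b c) = m a (m c b))
    (rel1 : ∀ a b c : P, br a (m b c) = m (br a b) c + m (br a c) b)
    (rel2 : ∀ a b c : P, br (m a b) c = m (br a c) b - m a (br c b)) :
    ∀ a₁ a₂ a₃ a₄ : P, m a₁ (m (br a₂ a₄) a₃) + m a₁ (m (br a₄ a₂) a₃) = 0 := by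
  intro a₁ a₂ a₃ a₄
  have h := (bracket_mul_mul_expand_left_first m br massoc mperm rel1 rel2 a₁ a₂ a₃ a₄).symm.trans
    (bracket_mul_mul_expand_right_first m br massoc rel1 rel2 a₁ a₂ a₃ a₄)
  linear_combination (norm := abel) h
end
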